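/- arXiv:1910.02542 — 7 statements merged into one kernel-verified Lean document; each statement's English description precedes it below -/
import Mathlib

section
/- For all α₁, α₂ > 0, Matusita's overlap coefficient of the two inverse Lomax densities equals ∫₀^∞ √(f(x; α₁)·f(x; α₂)) dx = 2√R/(R + 1), where R = α₁/α₂. -/
/-!
The geometric mean of the two densities is again of the form `C · x⁻² (1 + 1/x)^(-c)` with
`C = (α₁α₂)^(-1/2)` and `c = 1 + (1/α₁ + 1/α₂)/2`. The substitution `u = 1 + 1/x` carries
`x⁻² dx` on `(0, ∞)` to `du` on `(1, ∞)`, so the integral is `C/(c - 1)`, which simplifies to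
`2√(α₁α₂)/(α₁ + α₂) = 2√R/(R + 1)`.
-/

open MeasureTheory

/-- The inverse Lomax density with shape parameter `α`. -/
noncomputable def invLomaxPdf (α x : ℝ) : ℝ :=
  (1 / (α * x ^ 2)) * (1 + 1 / x) ^ (-(1 + 1 / α))

open Set

lemma image_one_add_inv_Ioi_zero : (fun x : ℝ => 1 + x⁻¹) '' Ioi 0 = Ioi 1 := by
  have hinv : Inv.inv '' Ioi (0 : ℝ) = Ioi 0 := by
    ext x
    simp [image_inv_eq_inv]
  rw [show (fun x : ℝ => 1 + x⁻¹) = (1 + ·) ∘ Inv.inv from rfl, image_comp, hinv,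
    image_const_add_Ioi, add_zero]

lemma integral_Ioi_inv_sq_smul_comp_one_add_inv {E : Type*} [NormedAddCommGroup E]
    [NormedSpace ℝ E] (g : ℝ → E) :
    ∫ x in Ioi (0 : ℝ), (x ^ 2)⁻¹ • g (1 + x⁻¹) = ∫ u in Ioi 1, g u := by
  have hderiv : ∀ x ∈ Ioi (0 : ℝ),
      HasDerivWithinAt (fun x => 1 + x⁻¹) (-(x ^ 2)⁻¹) (Ioi 0) x := fun x hx =>
    ((hasDerivAt_inv (ne_of_gt hx)).const_add 1).hasDerivWithinAt
  have hinj : InjOn (fun x : ℝ => 1 + x⁻¹) (Ioi 0) := fun a _ b _ hab =>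
    inv_injective (add_left_cancel hab)
  rw [← image_one_add_inv_Ioi_zero,
    integral_image_eq_integral_abs_deriv_smul measurableSet_Ioi hderiv hinj]
  simp only [abs_neg, abs_inv, abs_pow, sq_abs]

lemma integral_Ioi_inv_sq_mul_one_add_inv_rpow {c : ℝ} (hc : 1 < c) :
    ∫ x in Ioi (0 : ℝ), (x ^ 2)⁻¹ * (1 + x⁻¹) ^ (-c) = (c - 1)⁻¹ := by
  have hsubst := integral_Ioi_inv_sq_smul_comp_one_add_inv fun u => u ^ (-c)
  simp only [smul_eq_mul] at hsubst
  rw [hsubst, integral_Ioi_rpow_of_lt (by linarith) one_pos, Real.one_rpow,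
    show -c + 1 = -(c - 1) by ring, neg_div_neg_eq, one_div]

lemma sqrt_invLomaxPdf_mul_invLomaxPdf {α₁ α₂ x : ℝ} (h₁ : 0 < α₁) (h₂ : 0 < α₂) (hx : 0 < x) :
    √(invLomaxPdf α₁ x * invLomaxPdf α₂ x)
      = (√(α₁ * α₂))⁻¹ * ((x ^ 2)⁻¹ * (1 + x⁻¹) ^ (-(1 + (α₁⁻¹ + α₂⁻¹) / 2))) := by
  set c := 1 + (α₁⁻¹ + α₂⁻¹) / 2
  have hb : 0 < 1 + x⁻¹ := by positivity
  have hprod : invLomaxPdf α₁ x * invLomaxPdf α₂ x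
      = ((√(α₁ * α₂))⁻¹ * (x ^ 2)⁻¹ * (1 + x⁻¹) ^ (-c)) ^ 2 := by
    rw [mul_pow, ← Real.rpow_natCast ((1 + x⁻¹) ^ (-c)) 2, ← Real.rpow_mul hb.le, mul_pow,
      inv_pow, Real.sq_sqrt (by positivity), show -c * (2 : ℕ) = -(1 + α₁⁻¹) + -(1 + α₂⁻¹) by
        simp only [c]; push_cast; ring, Real.rpow_add hb]
    simp only [invLomaxPdf, one_div]
    field_simp
  rw [hprod, Real.sqrt_sq (by positivity), mul_assoc]

lemma inv_sqrt_mul_mul_inv_inv_add_inv_div_two {a b : ℝ} (ha : 0 < a) (hb : 0 < b) :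
    (√(a * b))⁻¹ * ((a⁻¹ + b⁻¹) / 2)⁻¹ = 2 * √(a / b) / (a / b + 1) := by
  obtain ⟨s, hs, rfl⟩ : ∃ s, 0 < s ∧ a = s ^ 2 :=
    ⟨√a, Real.sqrt_pos.2 ha, (Real.sq_sqrt ha.le).symm⟩
  obtain ⟨t, ht, rfl⟩ : ∃ t, 0 < t ∧ b = t ^ 2 :=
    ⟨√b, Real.sqrt_pos.2 hb, (Real.sq_sqrt hb.le).symm⟩
  rw [← mul_pow, ← div_pow, Real.sqrt_sq (by positivity), Real.sqrt_sq (by positivity)]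
  field_simp
  ring

/-- Matusita's overlap coefficient of two inverse Lomax densities equals
`2√R/(R+1)` where `R = α₁/α₂`. -/
theorem invLomax_matusita (α₁ α₂ : ℝ) (h₁ : 0 < α₁) (h₂ : 0 < α₂)
    (R : ℝ) (hR : R = α₁ / α₂) :
    ∫ x in Set.Ioi (0 : ℝ), Real.sqrt (invLomaxPdf α₁ x * invLomaxPdf α₂ x)
      = 2 * Real.sqrt R / (R + 1) := by
  have hc : 1 < 1 + (α₁⁻¹ + α₂⁻¹) / 2 := lt_add_of_pos_right 1 (by positivity)
  calc ∫ x in Ioi (0 : ℝ), √(invLomaxPdf α₁ x * invLomaxPdf α₂ x)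
      = ∫ x in Ioi (0 : ℝ),
          (√(α₁ * α₂))⁻¹ * ((x ^ 2)⁻¹ * (1 + x⁻¹) ^ (-(1 + (α₁⁻¹ + α₂⁻¹) / 2))) :=
        setIntegral_congr_fun measurableSet_Ioi fun x hx =>
          sqrt_invLomaxPdf_mul_invLomaxPdf h₁ h₂ hx
    _ = (√(α₁ * α₂))⁻¹ * ((α₁⁻¹ + α₂⁻¹) / 2)⁻¹ := by
        rw [integral_const_mul, integral_Ioi_inv_sq_mul_one_add_inv_rpow hc, add_sub_cancel_left]
    _ = 2 * √R / (R + 1) := by rw [hR, inv_sqrt_mul_mul_inv_inv_add_inv_div_two h₁ h₂]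
end

section
/- For all α₁, α₂ > 0 with α₁ ≠ α₂, Weitzman's overlap coefficient of the two inverse Lomax densities equals ∫₀^∞ min(f(x; α₁), f(x; α₂)) dx = 1 − R^(1/(1−R))·|1 − 1/R|, where R = α₁/α₂. -/
/-!
The inverse Lomax law with shape `α` has distribution function `F_α x = (x / (x + 1)) ^ (1 / α)`,
and its density is `f_α x = F_α x / (α x (x + 1))`. For `b < a` put `R = a / b > 1`; since
`F_b = F_a ^ R`, we get `f_b ≤ f_a` exactly where `F_a ^ (R - 1) ≤ R⁻¹`, i.e. where
`F_a ≤ q := R ^ (1 / (1 - R))`. So the two densities cross once, at the point `c` with `F_a c = q`,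
and the overlap is `F_b c + (1 - F_a c) = q ^ R + 1 - q = 1 - q (1 - 1 / R)`. The closed form is
invariant under `R ↦ R⁻¹`, which covers `α₁ < α₂`.
-/

open MeasureTheory

open Set Filter Topology Real

theorem setIntegral_Ioi_min_eq_of_crossing {f g : ℝ → ℝ} {a c : ℝ} (hac : a ≤ c)
    (hg : IntegrableOn g (Ioc a c)) (hf : IntegrableOn f (Ioi c))
    (hgf : ∀ x ∈ Ioc a c, g x ≤ f x) (hfg : ∀ x ∈ Ioi c, f x ≤ g x) :
    ∫ x in Ioi a, min (f x) (g x) = (∫ x in Ioc a c, g x) + ∫ x in Ioi c, f x := by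
  have hmin_g : EqOn (fun x => min (f x) (g x)) g (Ioc a c) := fun x hx => min_eq_right (hgf x hx)
  have hmin_f : EqOn (fun x => min (f x) (g x)) f (Ioi c) := fun x hx => min_eq_left (hfg x hx)
  rw [← Ioc_union_Ioi_eq_Ioi hac, setIntegral_union (Ioc_disjoint_Ioi le_rfl) measurableSet_Ioi
      (hg.congr_fun hmin_g.symm measurableSet_Ioc) (hf.congr_fun hmin_f.symm measurableSet_Ioi),
    setIntegral_congr_fun measurableSet_Ioc hmin_g, setIntegral_congr_fun measurableSet_Ioi hmin_f]

theorem Real.rpow_sub_one_le_inv_iff {R t : ℝ} (hR : 1 < R) (ht : 0 ≤ t) :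
    t ^ (R - 1) ≤ R⁻¹ ↔ t ≤ R ^ (1 / (1 - R)) := by
  have hR0 : 0 < R := zero_lt_one.trans hR
  rw [show 1 / (1 - R) = -(R - 1)⁻¹ by rw [one_div, ← neg_sub, inv_neg], rpow_neg hR0.le,
    ← inv_rpow hR0.le, le_rpow_inv_iff_of_pos ht (by positivity) (sub_pos.2 hR)]

theorem Real.rpow_one_div_one_sub_rpow_self {R : ℝ} (hR : 0 < R) (h1 : R ≠ 1) :
    (R ^ (1 / (1 - R))) ^ R = R ^ (1 / (1 - R)) / R := by
  have h1' : 1 - R ≠ 0 := sub_ne_zero.2 h1.symm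
  rw [← rpow_mul hR.le, ← rpow_sub_one hR.ne']
  congr 1
  field_simp
  ring

/- Written as a power of `x / (x + 1)` rather than as `(1 + 1 / x) ^ (-(1 / α))`, so that it takes
the value `0` at `0` and is continuous on `[0, ∞)` without a case split. -/
noncomputable def invLomaxCdf (α x : ℝ) : ℝ := (x / (x + 1)) ^ (1 / α)

noncomputable def invLomaxOverlap (R : ℝ) : ℝ := 1 - R ^ (1 / (1 - R)) * |1 - 1 / R|

section
variable {α a b x c : ℝ}

theorem invLomaxCdf_zero (hα : α ≠ 0) : invLomaxCdf α 0 = 0 := by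
  simp [invLomaxCdf, hα]

theorem invLomaxCdf_pos (hx : 0 < x) : 0 < invLomaxCdf α x := by
  unfold invLomaxCdf; positivity

theorem invLomaxCdf_rpow (ha : a ≠ 0) (hx : 0 ≤ x) :
    invLomaxCdf a x ^ (a / b) = invLomaxCdf b x := by
  rw [invLomaxCdf, ← rpow_mul (by positivity), one_div_mul_eq_div, div_div_cancel_left' ha,
    invLomaxCdf, one_div]

theorem invLomaxCdf_le_invLomaxCdf_iff (hα : 0 < α) (hx : 0 ≤ x) (hc : 0 ≤ c) :
    invLomaxCdf α x ≤ invLomaxCdf α c ↔ x ≤ c := by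
  rw [invLomaxCdf, invLomaxCdf, rpow_le_rpow_iff (by positivity) (by positivity) (by positivity),
    div_le_div_iff₀ (by positivity) (by positivity)]
  constructor <;> intro h <;> linarith

theorem exists_invLomaxCdf_eq (hα : 0 < α) {q : ℝ} (hq0 : 0 < q) (hq1 : q < 1) :
    ∃ c, 0 < c ∧ invLomaxCdf α c = q := by
  have hu0 : 0 < q ^ α := by positivity
  have hu1 : q ^ α < 1 := rpow_lt_one hq0.le hq1 hα
  refine ⟨q ^ α / (1 - q ^ α), by apply div_pos hu0; linarith, ?_⟩
  have hu : q ^ α / (1 - q ^ α) / (q ^ α / (1 - q ^ α) + 1) = q ^ α := by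
    have hne : 1 - q ^ α ≠ 0 := by linarith
    rw [div_add_one hne, div_div_div_cancel_right₀ hne, add_sub_cancel, div_one]
  rw [invLomaxCdf, hu, ← rpow_mul hq0.le, mul_one_div_cancel hα.ne', rpow_one]

theorem invLomaxPdf_eq (hx : 0 < x) :
    invLomaxPdf α x = invLomaxCdf α x / (α * (x * (x + 1))) := by
  have hu : 1 + 1 / x = (x / (x + 1))⁻¹ := by field_simp
  rw [invLomaxPdf, invLomaxCdf, hu, inv_rpow (by positivity), ← rpow_neg (by positivity), neg_neg,
    rpow_add (by positivity), rpow_one]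
  field_simp

theorem invLomaxPdf_nonneg (hα : 0 ≤ α) (hx : 0 < x) : 0 ≤ invLomaxPdf α x := by
  rw [invLomaxPdf_eq hx]
  exact div_nonneg (invLomaxCdf_pos hx).le (by positivity)

theorem hasDerivAt_invLomaxCdf (hx : 0 < x) :
    HasDerivAt (invLomaxCdf α) (invLomaxPdf α x) x := by
  have hu : HasDerivAt (fun y => y / (y + 1)) (1 / (x + 1) ^ 2) x :=
    ((hasDerivAt_id' x).fun_div ((hasDerivAt_id' x).add_const 1) (by positivity)).congr_deriv
      (by ring)
  refine (hu.rpow_const (p := 1 / α) (Or.inl (by positivity))).congr_deriv ?_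
  rw [invLomaxPdf_eq hx, invLomaxCdf, rpow_sub_one (by positivity)]
  field_simp

theorem continuousOn_invLomaxCdf (hα : 0 ≤ α) : ContinuousOn (invLomaxCdf α) (Ici 0) := by
  have hu : ContinuousOn (fun x : ℝ => x / (x + 1)) (Ici 0) :=
    ContinuousOn.div (by fun_prop) (by fun_prop) fun x (hx : 0 ≤ x) => by positivity
  exact hu.rpow_const fun _ _ => Or.inr (by positivity)

theorem tendsto_invLomaxCdf_atTop : Tendsto (invLomaxCdf α) atTop (𝓝 1) := by
  have hu : Tendsto (fun x : ℝ => x / (x + 1)) atTop (𝓝 1) := by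
    have h := (tendsto_inv_atTop_zero.comp
      (tendsto_atTop_add_const_right _ (1 : ℝ) tendsto_id)).const_sub (1 : ℝ)
    rw [sub_zero] at h
    refine h.congr' ?_
    filter_upwards [eventually_gt_atTop 0] with x hx
    rw [Function.comp_apply, id, eq_div_iff (by positivity), sub_mul, inv_mul_cancel₀ (by positivity)]
    ring
  have h := hu.rpow_const (p := 1 / α) (Or.inl one_ne_zero)
  rwa [one_rpow] at h

theorem integrableOn_Ioi_invLomaxPdf (hα : 0 ≤ α) (hc : 0 ≤ c) :
    IntegrableOn (invLomaxPdf α) (Ioi c) :=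
  integrableOn_Ioi_deriv_of_nonneg ((continuousOn_invLomaxCdf hα c hc).mono (Ici_subset_Ici.2 hc))
    (fun _ hx => hasDerivAt_invLomaxCdf (hc.trans_lt hx))
    (fun _ hx => invLomaxPdf_nonneg hα (hc.trans_lt hx)) tendsto_invLomaxCdf_atTop

theorem setIntegral_Ioi_invLomaxPdf (hα : 0 ≤ α) (hc : 0 ≤ c) :
    ∫ x in Ioi c, invLomaxPdf α x = 1 - invLomaxCdf α c :=
  integral_Ioi_of_hasDerivAt_of_nonneg
    ((continuousOn_invLomaxCdf hα c hc).mono (Ici_subset_Ici.2 hc))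
    (fun _ hx => hasDerivAt_invLomaxCdf (hc.trans_lt hx))
    (fun _ hx => invLomaxPdf_nonneg hα (hc.trans_lt hx)) tendsto_invLomaxCdf_atTop

theorem setIntegral_Ioc_invLomaxPdf (hα : 0 < α) (hc : 0 ≤ c) :
    ∫ x in Ioc 0 c, invLomaxPdf α x = invLomaxCdf α c := by
  rw [← intervalIntegral.integral_of_le hc,
    ← intervalIntegral.integral_Ioi_sub_Ioi (integrableOn_Ioi_invLomaxPdf hα.le le_rfl) hc,
    setIntegral_Ioi_invLomaxPdf hα.le le_rfl, setIntegral_Ioi_invLomaxPdf hα.le hc,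
    invLomaxCdf_zero hα.ne']
  ring

theorem invLomaxPdf_le_invLomaxPdf_iff (ha : 0 < a) (hb : 0 < b) (hx : 0 < x) :
    invLomaxPdf b x ≤ invLomaxPdf a x ↔ invLomaxCdf a x ^ (a / b - 1) ≤ b / a := by
  have ht := invLomaxCdf_pos (α := a) hx
  have hk : 0 < x * (x + 1) := by positivity
  rw [invLomaxPdf_eq hx, invLomaxPdf_eq hx, div_mul_eq_div_div (invLomaxCdf b x),
    div_mul_eq_div_div (invLomaxCdf a x), div_le_div_iff_of_pos_right hk,
    ← invLomaxCdf_rpow ha.ne' hx.le, rpow_sub_one ht.ne',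
    div_le_div_iff₀ hb ha, div_le_div_iff₀ ht ha, mul_comm b]

end

theorem invLomaxOverlap_inv {R : ℝ} (hR : 0 < R) : invLomaxOverlap R⁻¹ = invLomaxOverlap R := by
  rcases eq_or_ne R 1 with rfl | h1
  · simp
  have h1' : R - 1 ≠ 0 := sub_ne_zero.2 h1
  have hexp : -(1 / (1 - R⁻¹)) + 1 = 1 / (1 - R) := by
    field_simp
    ring
  have habs : |1 - 1 / R⁻¹| = R * |1 - 1 / R| := by
    have h : 1 - R = -(R * (1 - 1 / R)) := by field_simp; ring
    rw [one_div, inv_inv, h, abs_neg, abs_mul, abs_of_pos hR]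
  rw [invLomaxOverlap, invLomaxOverlap, inv_rpow hR.le, ← rpow_neg hR.le, habs, ← mul_assoc,
    ← rpow_add_one hR.ne', hexp]

theorem setIntegral_min_invLomaxPdf_of_lt {a b : ℝ} (hb : 0 < b) (hab : b < a) :
    ∫ x in Ioi 0, min (invLomaxPdf a x) (invLomaxPdf b x) = invLomaxOverlap (a / b) := by
  have ha : 0 < a := hb.trans hab
  have hR : 1 < a / b := (one_lt_div hb).2 hab
  set q := (a / b) ^ (1 / (1 - a / b)) with hq
  have hq0 : 0 < q := by positivity
  have hq1 : q < 1 := rpow_lt_one_of_one_lt_of_neg hR (one_div_neg.2 (sub_neg.2 hR))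
  obtain ⟨c, hc, hcq⟩ := exists_invLomaxCdf_eq ha hq0 hq1
  have hcross : ∀ x, 0 < x → (invLomaxPdf b x ≤ invLomaxPdf a x ↔ x ≤ c) := fun x hx => by
    rw [invLomaxPdf_le_invLomaxPdf_iff ha hb hx, ← inv_div a b,
      Real.rpow_sub_one_le_inv_iff hR (invLomaxCdf_pos hx).le, ← hq, ← hcq,
      invLomaxCdf_le_invLomaxCdf_iff ha hx.le hc.le]
  rw [setIntegral_Ioi_min_eq_of_crossing hc.le
      ((integrableOn_Ioi_invLomaxPdf hb.le le_rfl).mono_set Ioc_subset_Ioi_self)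
      (integrableOn_Ioi_invLomaxPdf ha.le hc.le) (fun x hx => (hcross x hx.1).2 hx.2)
      (fun x hx => (not_le.1 (mt (hcross x (hc.trans hx)).1 (not_le.2 hx))).le),
    setIntegral_Ioc_invLomaxPdf hb hc.le, setIntegral_Ioi_invLomaxPdf ha.le hc.le,
    ← invLomaxCdf_rpow ha.ne' hc.le, hcq, Real.rpow_one_div_one_sub_rpow_self (by positivity) hR.ne',
    invLomaxOverlap, abs_of_pos (sub_pos.2 ((div_lt_one (by positivity)).2 hR))]
  ring

theorem invLomax_weitzman_general (α₁ α₂ : ℝ) (h₁ : 0 < α₁) (h₂ : 0 < α₂)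
    (R : ℝ) (hR : R = α₁ / α₂) :
    ∫ x in Set.Ioi (0 : ℝ), min (invLomaxPdf α₁ x) (invLomaxPdf α₂ x)
      = 1 - R ^ (1 / (1 - R)) * |1 - 1 / R| := by
  subst hR
  rcases lt_trichotomy α₁ α₂ with h | rfl | h
  · simp_rw [min_comm (invLomaxPdf α₁ _)]
    rw [setIntegral_min_invLomaxPdf_of_lt h₁ h, ← inv_div, invLomaxOverlap_inv (by positivity)]
    rfl
  · simp [setIntegral_Ioi_invLomaxPdf h₁.le le_rfl, invLomaxCdf_zero h₁.ne', h₁.ne']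
  · exact setIntegral_min_invLomaxPdf_of_lt h₂ h

/-- Weitzman's overlap coefficient of two inverse Lomax densities equals
`1 − R^(1/(1−R))·|1 − 1/R|` where `R = α₁/α₂ ≠ 1`. -/
theorem invLomax_weitzman (α₁ α₂ : ℝ) (h₁ : 0 < α₁) (h₂ : 0 < α₂) (hne : α₁ ≠ α₂)
    (R : ℝ) (hR : R = α₁ / α₂) :
    ∫ x in Set.Ioi (0 : ℝ), min (invLomaxPdf α₁ x) (invLomaxPdf α₂ x)
      = 1 - R ^ (1 / (1 - R)) * |1 - 1 / R| :=
  invLomax_weitzman_general α₁ α₂ h₁ h₂ R hR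
end

section
/- For all α₁, α₂ > 0, the Kullback–Leibler divergence between the two inverse Lomax densities satisfies ∫₀^∞ f(x; α₁)·log(f(x; α₁)/f(x; α₂)) dx = R − 1 − log R, where R = α₁/α₂. -/
open MeasureTheory

/-! The substitution `u = log (1 + 1/x) / α₁` maps `(0, ∞)` onto itself and carries the inverse
Lomax law of shape `α₁` to the standard exponential law: `f(x; α₁) dx = e^{-u} du`. In this
variable the log-likelihood ratio is affine, `log (f(x; α₁) / f(x; α₂)) = -log R + (R - 1) u`,
so the divergence is `∫₀^∞ e^{-u} (-log R + (R - 1) u) du = R - 1 - log R`. -/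

open Real Set

noncomputable def invLomaxToExp (α x : ℝ) : ℝ :=
  log (1 + 1 / x) / α

lemma hasDerivAt_invLomaxToExp (α : ℝ) {x : ℝ} (hx : 0 < x) :
    HasDerivAt (invLomaxToExp α) (-(α * (x ^ 2 + x))⁻¹) x := by
  have hinv : HasDerivAt (fun y : ℝ => 1 + 1 / y) (-(x ^ 2)⁻¹) x := by
    simpa [one_div] using (hasDerivAt_inv hx.ne').const_add 1
  refine ((hinv.log (by positivity)).div_const α).congr_deriv ?_
  field_simp

lemma strictAntiOn_invLomaxToExp {α : ℝ} (hα : 0 < α) :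
    StrictAntiOn (invLomaxToExp α) (Ioi 0) := by
  intro x _ y hy hxy
  have hy : 0 < y := hy
  refine div_lt_div_of_pos_right (log_lt_log (by positivity) ?_) hα
  gcongr

lemma invLomaxToExp_image_Ioi {α : ℝ} (hα : 0 < α) :
    invLomaxToExp α '' Ioi 0 = Ioi 0 := by
  ext u
  constructor
  · rintro ⟨x, hx, rfl⟩
    have hx : 0 < x := hx
    exact div_pos (log_pos (by simpa using hx)) hα
  · intro hu
    have hexp : 1 < exp (α * u) := one_lt_exp_iff.2 (mul_pos hα hu)
    refine ⟨(exp (α * u) - 1)⁻¹, mem_Ioi.2 (inv_pos.2 (sub_pos.2 hexp)), ?_⟩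
    rw [invLomaxToExp, one_div, inv_inv, add_sub_cancel, log_exp]
    field_simp

lemma invLomaxPdf_eq_s4 {α x : ℝ} (hx : 0 < x) :
    invLomaxPdf α x = (α * (x ^ 2 + x))⁻¹ * exp (-invLomaxToExp α x) := by
  have hpos : 0 < 1 + 1 / x := by positivity
  rw [invLomaxPdf, invLomaxToExp, show -(1 + 1 / α) = -1 + -(1 / α) by ring,
    rpow_add hpos, rpow_neg_one, rpow_def_of_pos hpos]
  field_simp

lemma log_invLomaxPdf_div {α₁ α₂ x : ℝ} (h₁ : 0 < α₁) (h₂ : 0 < α₂) (hx : 0 < x) :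
    log (invLomaxPdf α₁ x / invLomaxPdf α₂ x)
      = -log (α₁ / α₂) + (α₁ / α₂ - 1) * invLomaxToExp α₁ x := by
  have hratio : invLomaxPdf α₁ x / invLomaxPdf α₂ x
      = (α₁ / α₂)⁻¹ * exp ((α₁ / α₂ - 1) * invLomaxToExp α₁ x) := by
    rw [invLomaxPdf_eq_s4 hx, invLomaxPdf_eq_s4 hx, mul_div_mul_comm, ← exp_sub]
    congr 1
    · field_simp
    · congr 1
      simp only [invLomaxToExp]
      field_simp
      ring
  rw [hratio, log_mul (by positivity) (exp_pos _).ne', log_inv, log_exp]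

lemma integral_invLomaxPdf_mul_comp {α : ℝ} (hα : 0 < α) (g : ℝ → ℝ) :
    ∫ x in Ioi 0, invLomaxPdf α x * g (invLomaxToExp α x) = ∫ u in Ioi 0, exp (-u) * g u := by
  have hderiv : ∀ x ∈ Ioi (0 : ℝ),
      HasDerivWithinAt (invLomaxToExp α) (-(α * (x ^ 2 + x))⁻¹) (Ioi 0) x :=
    fun x hx => (hasDerivAt_invLomaxToExp α hx).hasDerivWithinAt
  have hcov := integral_image_eq_integral_abs_deriv_smul measurableSet_Ioi hderiv
    (strictAntiOn_invLomaxToExp hα).injOn fun u => exp (-u) * g u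
  rw [invLomaxToExp_image_Ioi hα] at hcov
  rw [hcov]
  refine setIntegral_congr_fun measurableSet_Ioi fun x hx => ?_
  have hx : 0 < x := hx
  rw [invLomaxPdf_eq_s4 hx, abs_neg, abs_of_pos (by positivity), smul_eq_mul, mul_assoc]

lemma integral_exp_neg_mul_affine (a b : ℝ) :
    ∫ u in Ioi 0, exp (-u) * (a + b * u) = a + b := by
  have hrpow_one : ∀ u : ℝ, exp (-u) * u ^ ((2 : ℝ) - 1) = exp (-u) * u := by norm_num
  have hmean : ∫ u in Ioi 0, exp (-u) * u = 1 := by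
    simpa [hrpow_one] using (Gamma_eq_integral two_pos).symm.trans Gamma_two
  have hint : IntegrableOn (fun u => exp (-u) * u) (Ioi 0) := by
    simpa [hrpow_one] using GammaIntegral_convergent two_pos
  have hint0 : IntegrableOn (fun u => exp (-u)) (Ioi 0) := by
    simpa using exp_neg_integrableOn_Ioi 0 one_pos
  simp_rw [mul_add, mul_left_comm _ b]
  rw [integral_add (hint0.mul_const a) (hint.const_mul b), integral_mul_const,
    integral_const_mul, integral_exp_neg_Ioi_zero, hmean]
  ring

/-- The Kullback–Leibler divergence between two inverse Lomax densities equals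
`R − 1 − log R`, where `R = α₁/α₂`. -/
theorem invLomax_kl (α₁ α₂ : ℝ) (h₁ : 0 < α₁) (h₂ : 0 < α₂)
    (R : ℝ) (hR : R = α₁ / α₂) :
    ∫ x in Set.Ioi (0 : ℝ),
        invLomaxPdf α₁ x * Real.log (invLomaxPdf α₁ x / invLomaxPdf α₂ x)
      = R - 1 - Real.log R := by
  have hlog : EqOn (fun x => invLomaxPdf α₁ x * log (invLomaxPdf α₁ x / invLomaxPdf α₂ x))
      (fun x => invLomaxPdf α₁ x * (-log R + (R - 1) * invLomaxToExp α₁ x)) (Ioi 0) :=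
    fun x hx => by dsimp only; rw [log_invLomaxPdf_div h₁ h₂ hx, hR]
  rw [setIntegral_congr_fun measurableSet_Ioi hlog,
    integral_invLomaxPdf_mul_comp h₁ fun u => -log R + (R - 1) * u,
    integral_exp_neg_mul_affine]
  ring
end

section
/- For all α₁, α₂ > 0, the symmetrized Kullback–Leibler divergence between the two inverse Lomax densities satisfies KL(f₁‖f₂) = ∫₀^∞ (f(x; α₁) − f(x; α₂))·log(f(x; α₁)/f(x; α₂)) dx = (R − 1)²/R, and consequently the overlap measure Λ = 1/(1 + KL(f₁‖f₂)) equals R/(R² − R + 1), where R = α₁/α₂. -/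
open MeasureTheory

/-!
The substitution `u = log (1 + 1/x)` carries the inverse Lomax density with shape `α` to the
exponential density with rate `1/α`. The symmetrized divergence `∫ (f - g) log (f / g)` is
invariant under such a reparametrization, since the Jacobian cancels inside the logarithm. For
exponential densities with rates `a, b` the log-ratio `log (a / b) + (b - a) u` is affine in `u`,
so the divergence follows from the first two moments: it equals `(a - b)² / (a b)`, which is
`(R - 1)² / R` for `a = 1/α₁`, `b = 1/α₂`.
-/

open Real Set

theorem integral_Ioi_eq_integral_Ioi_comp_inv_exp_sub_one {E : Type*} [NormedAddCommGroup E]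
    [NormedSpace ℝ E] (g : ℝ → E) :
    ∫ x in Ioi (0 : ℝ), g x
      = ∫ u in Ioi (0 : ℝ), (exp u / (exp u - 1) ^ 2) • g (exp u - 1)⁻¹ := by
  have himage : (fun u ↦ (exp u - 1)⁻¹) '' Ioi 0 = Ioi 0 := by
    ext x
    constructor
    · rintro ⟨u, hu, rfl⟩
      exact inv_pos.2 (sub_pos.2 (one_lt_exp_iff.2 hu))
    · intro (hx : 0 < x)
      refine ⟨log (1 + x⁻¹), log_pos (by simpa using hx), ?_⟩
      simp only [exp_log (by positivity : 0 < 1 + x⁻¹), add_sub_cancel_left, inv_inv]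
  have hderiv : ∀ u ∈ Ioi (0 : ℝ), HasDerivWithinAt (fun u ↦ (exp u - 1)⁻¹)
      (-exp u / (exp u - 1) ^ 2) (Ioi 0) u := fun u hu ↦
    ((hasDerivAt_exp u).sub_const 1 |>.inv
      (sub_ne_zero.2 (one_lt_exp_iff.2 hu).ne')).hasDerivWithinAt
  have hinj : InjOn (fun u ↦ (exp u - 1)⁻¹) (Ioi 0) := fun a _ b _ h ↦
    exp_injective (sub_left_injective (inv_injective h))
  conv_lhs => rw [← himage]
  rw [integral_image_eq_integral_abs_deriv_smul measurableSet_Ioi hderiv hinj]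
  refine setIntegral_congr_fun measurableSet_Ioi fun u _ ↦ ?_
  rw [abs_div, abs_neg, abs_of_pos (exp_pos u), abs_sq]

theorem exp_div_sq_mul_invLomaxPdf_inv_exp_sub_one (α : ℝ) {u : ℝ} (hu : u ≠ 0) :
    exp u / (exp u - 1) ^ 2 * invLomaxPdf α (exp u - 1)⁻¹ = α⁻¹ * exp (-(α⁻¹ * u)) := by
  have hne : exp u - 1 ≠ 0 := sub_ne_zero.2 (by simpa using hu)
  have hpow : (1 + 1 / (exp u - 1)⁻¹) ^ (-(1 + 1 / α)) = exp (-u) * exp (-(α⁻¹ * u)) := by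
    rw [one_div, inv_inv, add_sub_cancel, ← exp_mul, ← exp_add]
    ring_nf
  rw [invLomaxPdf, hpow, inv_pow]
  field_simp
  rw [← exp_add, add_neg_cancel, exp_zero]

theorem mul_sub_mul_log_div_mul_left {J : ℝ} (hJ : J ≠ 0) (p q : ℝ) :
    J * ((p - q) * log (p / q)) = (J * p - J * q) * log (J * p / (J * q)) := by
  rw [mul_div_mul_left _ _ hJ]
  ring

theorem integrableOn_exp_neg_mul_Ioi {r : ℝ} (hr : 0 < r) :
    IntegrableOn (fun u ↦ exp (-(r * u))) (Ioi 0) := by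
  simpa only [neg_mul] using integrableOn_exp_mul_Ioi (neg_neg_of_pos hr) 0

theorem integrableOn_mul_exp_neg_mul_Ioi {r : ℝ} (hr : 0 < r) :
    IntegrableOn (fun u ↦ u * exp (-(r * u))) (Ioi 0) := by
  have h := integrableOn_rpow_mul_exp_neg_mul_rpow (s := 1) (p := 1) (by norm_num) one_pos hr
  simpa only [rpow_one, neg_mul] using h

theorem integrableOn_affine_mul_exp_neg_mul_Ioi (c d : ℝ) {r : ℝ} (hr : 0 < r) :
    IntegrableOn (fun u ↦ (c + d * u) * exp (-(r * u))) (Ioi 0) := by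
  simp_rw [add_mul, mul_assoc]
  exact ((integrableOn_exp_neg_mul_Ioi hr).const_mul c).add
    ((integrableOn_mul_exp_neg_mul_Ioi hr).const_mul d)

theorem integral_affine_mul_exp_neg_mul_Ioi (c d : ℝ) {r : ℝ} (hr : 0 < r) :
    ∫ u in Ioi 0, (c + d * u) * exp (-(r * u)) = c / r + d / r ^ 2 := by
  have hmoment₀ : ∫ u in Ioi 0, exp (-(r * u)) = r⁻¹ := by
    simpa [neg_mul] using integral_exp_mul_Ioi (neg_neg_of_pos hr) 0
  have hmoment₁ : ∫ u in Ioi 0, u * exp (-(r * u)) = (r ^ 2)⁻¹ := by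
    have h := integral_rpow_mul_exp_neg_mul_Ioi two_pos hr
    norm_num [Gamma_two] at h
    exact h
  simp_rw [add_mul, mul_assoc]
  rw [integral_add ((integrableOn_exp_neg_mul_Ioi hr).const_mul c)
      ((integrableOn_mul_exp_neg_mul_Ioi hr).const_mul d),
    integral_const_mul, integral_const_mul, hmoment₀, hmoment₁, div_eq_mul_inv, div_eq_mul_inv]

theorem integral_sub_mul_log_div_exp_neg_mul_Ioi {a b : ℝ} (ha : 0 < a) (hb : 0 < b) :
    ∫ u in Ioi 0, (a * exp (-(a * u)) - b * exp (-(b * u)))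
        * log (a * exp (-(a * u)) / (b * exp (-(b * u)))) = (a - b) ^ 2 / (a * b) := by
  have hlog (u : ℝ) : log (a * exp (-(a * u)) / (b * exp (-(b * u))))
      = log (a / b) + (b - a) * u := by
    rw [log_div (by positivity) (by positivity), log_mul ha.ne' (exp_ne_zero _),
      log_mul hb.ne' (exp_ne_zero _), log_exp, log_exp, log_div ha.ne' hb.ne']
    ring
  have hsplit : ∀ u, (a * exp (-(a * u)) - b * exp (-(b * u)))
        * log (a * exp (-(a * u)) / (b * exp (-(b * u))))
      = a * ((log (a / b) + (b - a) * u) * exp (-(a * u)))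
        - b * ((log (a / b) + (b - a) * u) * exp (-(b * u))) := fun u ↦ by
    rw [hlog]; ring
  simp_rw [hsplit]
  rw [integral_sub ((integrableOn_affine_mul_exp_neg_mul_Ioi _ _ ha).const_mul a)
      ((integrableOn_affine_mul_exp_neg_mul_Ioi _ _ hb).const_mul b),
    integral_const_mul, integral_const_mul, integral_affine_mul_exp_neg_mul_Ioi _ _ ha,
    integral_affine_mul_exp_neg_mul_Ioi _ _ hb]
  field_simp
  ring

/-- The symmetrized Kullback–Leibler divergence between two inverse Lomax densities
equals `(R − 1)²/R`, and consequently the overlap measure `Λ = 1/(1 + KL)` equals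
`R/(R² − R + 1)`, where `R = α₁/α₂`. -/
theorem invLomax_symmKL_and_lambda (α₁ α₂ : ℝ) (h₁ : 0 < α₁) (h₂ : 0 < α₂)
    (R : ℝ) (hR : R = α₁ / α₂) :
    (∫ x in Set.Ioi (0 : ℝ),
        (invLomaxPdf α₁ x - invLomaxPdf α₂ x)
          * Real.log (invLomaxPdf α₁ x / invLomaxPdf α₂ x))
      = (R - 1) ^ 2 / R ∧
    1 / (1 + ∫ x in Set.Ioi (0 : ℝ),
        (invLomaxPdf α₁ x - invLomaxPdf α₂ x)
          * Real.log (invLomaxPdf α₁ x / invLomaxPdf α₂ x))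
      = R / (R ^ 2 - R + 1) := by
  have hKL : (∫ x in Ioi (0 : ℝ), (invLomaxPdf α₁ x - invLomaxPdf α₂ x)
      * log (invLomaxPdf α₁ x / invLomaxPdf α₂ x)) = (R - 1) ^ 2 / R := by
    rw [integral_Ioi_eq_integral_Ioi_comp_inv_exp_sub_one]
    calc _ = ∫ u in Ioi 0, (α₁⁻¹ * exp (-(α₁⁻¹ * u)) - α₂⁻¹ * exp (-(α₂⁻¹ * u)))
              * log (α₁⁻¹ * exp (-(α₁⁻¹ * u)) / (α₂⁻¹ * exp (-(α₂⁻¹ * u)))) := by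
          refine setIntegral_congr_fun measurableSet_Ioi fun u (hu : 0 < u) ↦ ?_
          have hJ : exp u / (exp u - 1) ^ 2 ≠ 0 :=
            div_ne_zero (exp_ne_zero u) (pow_ne_zero 2 (sub_ne_zero.2 (one_lt_exp_iff.2 hu).ne'))
          rw [smul_eq_mul, mul_sub_mul_log_div_mul_left hJ,
            exp_div_sq_mul_invLomaxPdf_inv_exp_sub_one _ hu.ne',
            exp_div_sq_mul_invLomaxPdf_inv_exp_sub_one _ hu.ne']
      _ = (α₁⁻¹ - α₂⁻¹) ^ 2 / (α₁⁻¹ * α₂⁻¹) :=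
          integral_sub_mul_log_div_exp_neg_mul_Ioi (inv_pos.2 h₁) (inv_pos.2 h₂)
      _ = (R - 1) ^ 2 / R := by
          rw [hR]
          field_simp
          ring
  have hR_pos : 0 < R := hR ▸ div_pos h₁ h₂
  refine ⟨hKL, ?_⟩
  rw [hKL, one_add_div hR_pos.ne', one_div_div]
  ring
end

section
/- Weitzman's overlap measure satisfies the reciprocity property: for every R > 0 with R ≠ 1, Δ(1/R) = Δ(R). -/
/-! Since `1 / (1 - 1/R) = 1 - 1 / (1 - R)`, the power term of `Δ(1/R)` is `R ^ (1 / (1 - R)) / R`,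
while `|1 - R| = R * |1 - 1/R|`; the two factors `R` cancel. -/

/-- Weitzman's overlap measure as a function of the ratio of shape parameters. -/
noncomputable def deltaOVL (R : ℝ) : ℝ := 1 - R ^ (1 / (1 - R)) * |1 - 1 / R|

open Real

theorem abs_one_sub_eq_mul_abs_one_sub_inv {K : Type*} [Field K] [LinearOrder K]
    [IsStrictOrderedRing K] {R : K} (hR : 0 < R) : |1 - R| = R * |1 - R⁻¹| := by
  rw [show 1 - R = R * (R⁻¹ - 1) by field_simp, abs_mul, abs_of_pos hR, abs_sub_comm]

theorem inv_rpow_one_div_one_sub_inv {R : ℝ} (hR : 0 < R) (hR1 : R ≠ 1) :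
    R⁻¹ ^ (1 / (1 - R⁻¹)) = R ^ (1 / (1 - R)) / R := by
  have hexp : 1 / (1 - R⁻¹) = -(1 / (1 - R) - 1) := by
    field_simp [sub_ne_zero.mpr hR1.symm]
    ring
  rw [hexp, inv_rpow hR.le, ← rpow_neg hR.le, neg_neg, rpow_sub_one hR.ne']

/-- Reciprocity of Weitzman's overlap measure: `Δ(1/R) = Δ(R)` for `R > 0`, `R ≠ 1`. -/
theorem deltaOVL_reciprocity (R : ℝ) (hR : 0 < R) (hR1 : R ≠ 1) :
    deltaOVL (1 / R) = deltaOVL R := by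
  rw [deltaOVL, deltaOVL, one_div_one_div, one_div R, inv_rpow_one_div_one_sub_inv hR hR1,
    abs_one_sub_eq_mul_abs_one_sub_inv hR]
  field_simp
end

section
/- Weitzman's overlap measure Δ is strictly monotonically increasing on the interval (0, 1) and strictly monotonically decreasing on the interval (1, ∞). -/
/-!
For `R > 0`, `R ≠ 1` we have `1 - Δ(R) = exp (g R)` with
`g R = R / (1 - R) * log R + log |1 - R|`, and a direct computation gives
`g' R = log R / (1 - R) ^ 2`, which has the sign of `log R`. Hence `g` is strictly decreasing
on `(0, 1)` and strictly increasing on `(1, ∞)`, and `Δ = 1 - exp ∘ g` behaves the opposite way.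
-/

open Real Set

/-- The logarithm of `1 - deltaOVL R`. Mathlib's `Real.log (1 - R)` is `log |1 - R|`, so one
formula serves on both sides of `1`. -/
noncomputable def logOneSubDeltaOVL (R : ℝ) : ℝ := R / (1 - R) * log R + log (1 - R)

lemma deltaOVL_eq_one_sub_exp {R : ℝ} (hR0 : 0 < R) (hR1 : R ≠ 1) :
    deltaOVL R = 1 - exp (logOneSubDeltaOVL R) := by
  have h1R : 1 - R ≠ 0 := sub_ne_zero.mpr hR1.symm
  have habs : |1 - 1 / R| = |1 - R| / R := by
    rw [one_sub_div hR0.ne', abs_div, abs_of_pos hR0, abs_sub_comm]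
  have hexponent : 1 / (1 - R) * log R = R / (1 - R) * log R + log R := by
    field_simp
    ring
  rw [deltaOVL, sub_right_inj, logOneSubDeltaOVL, habs, rpow_def_of_pos hR0, mul_comm (log R),
    hexponent, exp_add, exp_add, exp_log hR0, ← log_abs (1 - R), exp_log (abs_pos.mpr h1R)]
  field_simp

lemma hasDerivAt_logOneSubDeltaOVL {x : ℝ} (hx0 : 0 < x) (hx1 : x ≠ 1) :
    HasDerivAt logOneSubDeltaOVL (log x / (1 - x) ^ 2) x := by
  have h1x : 1 - x ≠ 0 := sub_ne_zero.mpr hx1.symm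
  have hratio : HasDerivAt (fun R => R / (1 - R)) (1 / (1 - x) ^ 2) x := by
    refine ((hasDerivAt_id' x).div ((hasDerivAt_id' x).const_sub 1) h1x).congr_deriv ?_
    field_simp
    ring
  refine ((hratio.mul (hasDerivAt_log hx0.ne')).add
    (((hasDerivAt_id' x).const_sub 1).log h1x)).congr_deriv ?_
  field_simp
  ring

lemma strictAntiOn_logOneSubDeltaOVL : StrictAntiOn logOneSubDeltaOVL (Ioo 0 1) := by
  have hderiv : ∀ x ∈ Ioo (0 : ℝ) 1, HasDerivAt logOneSubDeltaOVL (log x / (1 - x) ^ 2) x :=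
    fun x hx => hasDerivAt_logOneSubDeltaOVL hx.1 hx.2.ne
  refine strictAntiOn_of_hasDerivWithinAt_neg (f' := fun x => log x / (1 - x) ^ 2) (convex_Ioo 0 1)
    (fun x hx => (hderiv x hx).continuousAt.continuousWithinAt) (fun x hx => ?_) (fun x hx => ?_)
    <;> simp only [interior_Ioo] at hx ⊢
  · exact (hderiv x hx).hasDerivWithinAt
  · exact div_neg_of_neg_of_pos (log_neg hx.1 hx.2) (pow_pos (sub_pos.mpr hx.2) 2)

lemma strictMonoOn_logOneSubDeltaOVL : StrictMonoOn logOneSubDeltaOVL (Ioi 1) := by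
  have hderiv : ∀ x ∈ Ioi (1 : ℝ), HasDerivAt logOneSubDeltaOVL (log x / (1 - x) ^ 2) x :=
    fun x hx => hasDerivAt_logOneSubDeltaOVL (zero_lt_one.trans hx) (ne_of_gt hx)
  refine strictMonoOn_of_hasDerivWithinAt_pos (f' := fun x => log x / (1 - x) ^ 2) (convex_Ioi 1)
    (fun x hx => (hderiv x hx).continuousAt.continuousWithinAt) (fun x hx => ?_) (fun x hx => ?_)
    <;> simp only [interior_Ioi] at hx ⊢
  · exact (hderiv x hx).hasDerivWithinAt
  · exact div_pos (log_pos hx) (sq_pos_of_ne_zero (sub_ne_zero.mpr (ne_of_gt hx).symm))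

/-- Weitzman's overlap measure is strictly increasing on `(0, 1)` and strictly
decreasing on `(1, ∞)`. -/
theorem deltaOVL_monotone :
    StrictMonoOn deltaOVL (Set.Ioo 0 1) ∧ StrictAntiOn deltaOVL (Set.Ioi 1) := by
  constructor
  · intro a ha b hb hab
    rw [deltaOVL_eq_one_sub_exp ha.1 ha.2.ne, deltaOVL_eq_one_sub_exp hb.1 hb.2.ne]
    exact sub_lt_sub_left (exp_lt_exp.mpr (strictAntiOn_logOneSubDeltaOVL ha hb hab)) 1
  · intro a ha b hb hab
    rw [deltaOVL_eq_one_sub_exp (zero_lt_one.trans ha) (ne_of_gt ha),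
      deltaOVL_eq_one_sub_exp (zero_lt_one.trans hb) (ne_of_gt hb)]
    exact sub_lt_sub_left (exp_lt_exp.mpr (strictMonoOn_logOneSubDeltaOVL ha hb hab)) 1
end

section
/- Let n₁ ≥ 1 and n₂ ≥ 3 be integers, α₁, α₂ > 0, and let U and V be independent random variables with U distributed as Gamma with shape n₁ and rate n₁/α₁ and V distributed as Gamma with shape n₂ and rate n₂/α₂. Then Var(U/V) = R²·n₂²·(n₁ + n₂ − 1)/(n₁·(n₂ − 1)²·(n₂ − 2)), where R = α₁/α₂; consequently the unbiased estimator R* = (n₂ − 1)/n₂ · (U/V) satisfies Var(R*) = R²·(n₁ + n₂ − 1)/(n₁·(n₂ − 2)). -/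
open MeasureTheory ProbabilityTheory Real Set

/-! By independence `E[U/V] = E[U] E[V⁻¹]` and `E[(U/V)²] = E[U²] E[V⁻²]`. All four moments
are values of `∫ xˢ dΓ(a, r) = Γ(a + s) / (Γ(a) rˢ)` (valid for `a + s > 0`). For
`U ~ Γ(a₁, r₁)`, `V ~ Γ(a₂, r₂)` this gives
`Var(U/V) = (r₂/r₁)² a₁ / (a₂ - 1) · ((a₁ + 1)/(a₂ - 2) - a₁/(a₂ - 1))`, and
`(a₁ + 1)(a₂ - 1) - a₁(a₂ - 2) = a₁ + a₂ - 1`. -/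

lemma integral_gammaMeasure_eq_integral_Ioi {a r : ℝ} (ha : 0 < a) (hr : 0 < r) (f : ℝ → ℝ) :
    ∫ x, f x ∂gammaMeasure a r
      = ∫ x in Ioi 0, r ^ a / Gamma a * x ^ (a - 1) * exp (-(r * x)) * f x := by
  have hpdf : Measurable (gammaPDF a r) := (measurable_gammaPDFReal a r).ennreal_ofReal
  rw [gammaMeasure, integral_withDensity_eq_integral_toReal_smul hpdf
    (ae_of_all _ fun _ => ENNReal.ofReal_lt_top), ← integral_Ici_eq_integral_Ioi,
    ← integral_indicator measurableSet_Ici]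
  congr 1 with x
  rw [gammaPDF, ENNReal.toReal_ofReal (gammaPDFReal_nonneg ha hr x), smul_eq_mul, gammaPDFReal]
  by_cases hx : 0 ≤ x <;> simp [hx]

lemma integral_rpow_gammaMeasure {a r s : ℝ} (ha : 0 < a) (hr : 0 < r) (has : 0 < a + s) :
    ∫ x, x ^ s ∂gammaMeasure a r = Gamma (a + s) / (Gamma a * r ^ s) := by
  rw [integral_gammaMeasure_eq_integral_Ioi ha hr]
  have hpow : ∀ x ∈ Ioi (0 : ℝ), r ^ a / Gamma a * x ^ (a - 1) * exp (-(r * x)) * x ^ s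
      = r ^ a / Gamma a * (x ^ (a + s - 1) * exp (-(r * x))) := fun x hx => by
    rw [show a + s - 1 = a - 1 + s by ring, rpow_add hx]
    ring
  rw [setIntegral_congr_fun measurableSet_Ioi hpow, integral_const_mul,
    integral_rpow_mul_exp_neg_mul_Ioi has hr, one_div, inv_rpow hr.le, rpow_add hr]
  have := (Gamma_pos_of_pos ha).ne'
  have := (rpow_pos_of_pos hr a).ne'
  have := (rpow_pos_of_pos hr s).ne'
  field_simp

lemma integral_id_gammaMeasure {a r : ℝ} (ha : 0 < a) (hr : 0 < r) :
    ∫ x, x ∂gammaMeasure a r = a / r := by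
  have h := integral_rpow_gammaMeasure ha hr (s := 1) (by linarith)
  simp only [rpow_one, Gamma_add_one ha.ne'] at h
  have := (Gamma_pos_of_pos ha).ne'
  rw [h]
  field_simp

lemma integral_sq_gammaMeasure {a r : ℝ} (ha : 0 < a) (hr : 0 < r) :
    ∫ x, x ^ 2 ∂gammaMeasure a r = a * (a + 1) / r ^ 2 := by
  have h := integral_rpow_gammaMeasure ha hr (s := 2) (by linarith)
  simp only [rpow_two] at h
  rw [h, show a + 2 = a + 1 + 1 by ring, Gamma_add_one (by positivity), Gamma_add_one ha.ne']
  have := (Gamma_pos_of_pos ha).ne'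
  field_simp

lemma integral_inv_gammaMeasure {a r : ℝ} (ha : 1 < a) (hr : 0 < r) :
    ∫ x, x⁻¹ ∂gammaMeasure a r = r / (a - 1) := by
  have h := integral_rpow_gammaMeasure (s := -1) (by linarith : 0 < a) hr (by linarith)
  simp only [rpow_neg_one] at h
  have hΓ : Gamma a = (a - 1) * Gamma (a - 1) := by
    rw [← Gamma_add_one (by linarith), sub_add_cancel]
  rw [h, ← sub_eq_add_neg, hΓ]
  have := (Gamma_pos_of_pos (by linarith : 0 < a - 1)).ne'
  have : a - 1 ≠ 0 := by linarith
  field_simp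

lemma integral_inv_sq_gammaMeasure {a r : ℝ} (ha : 2 < a) (hr : 0 < r) :
    ∫ x, (x ^ 2)⁻¹ ∂gammaMeasure a r = r ^ 2 / ((a - 1) * (a - 2)) := by
  have h := integral_rpow_gammaMeasure (s := -2) (by linarith : 0 < a) hr (by linarith)
  simp only [rpow_neg_ofNat, zpow_neg, zpow_ofNat] at h
  have hΓ : Gamma a = (a - 1) * ((a - 2) * Gamma (a - 2)) := by
    have h₁ := Gamma_add_one (s := a - 1) (by linarith)
    have h₂ := Gamma_add_one (s := a - 2) (by linarith)
    rw [sub_add_cancel] at h₁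
    rw [show a - 2 + 1 = a - 1 by ring] at h₂
    rw [h₁, h₂]
  rw [h, ← sub_eq_add_neg, hΓ]
  have := (Gamma_pos_of_pos (by linarith : 0 < a - 2)).ne'
  have : a - 1 ≠ 0 := by linarith
  have : a - 2 ≠ 0 := by linarith
  field_simp

lemma aemeasurable_of_map_eq_gammaMeasure {Ω : Type*} {mΩ : MeasurableSpace Ω}
    {μ : Measure Ω} {X : Ω → ℝ} {a r : ℝ} (ha : 0 < a) (hr : 0 < r)
    (hX : μ.map X = gammaMeasure a r) : AEMeasurable X μ :=
  have := isProbabilityMeasure_gammaMeasure ha hr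
  aemeasurable_of_map_neZero (hX ▸ inferInstance)

lemma ProbabilityTheory.IndepFun.integral_comp_div_comp {Ω : Type*} {mΩ : MeasurableSpace Ω}
    {μ : Measure Ω} {X Y : Ω → ℝ} (hXY : IndepFun X Y μ) (hX : AEMeasurable X μ) (hY : AEMeasurable Y μ)
    {f g : ℝ → ℝ} (hf : Measurable f) (hg : Measurable g) :
    ∫ ω, f (X ω) / g (Y ω) ∂μ = (∫ x, f x ∂μ.map X) * ∫ y, (g y)⁻¹ ∂μ.map Y := by
  simp_rw [div_eq_mul_inv]
  rw [hXY.integral_fun_comp_mul_comp (f := f) (g := fun y => (g y)⁻¹) hX hY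
      hf.aestronglyMeasurable hg.inv.aestronglyMeasurable,
    ← integral_map (f := f) hX hf.aestronglyMeasurable,
    ← integral_map (f := fun y => (g y)⁻¹) hY hg.inv.aestronglyMeasurable]

lemma integral_const_mul_sq_sub_sq_integral {Ω : Type*} {mΩ : MeasurableSpace Ω}
    (μ : Measure Ω) (c : ℝ) (W : Ω → ℝ) :
    ∫ ω, (c * W ω) ^ 2 ∂μ - (∫ ω, c * W ω ∂μ) ^ 2
      = c ^ 2 * (∫ ω, W ω ^ 2 ∂μ - (∫ ω, W ω ∂μ) ^ 2) := by
  simp_rw [mul_pow]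
  rw [integral_const_mul, integral_const_mul]
  ring

lemma ProbabilityTheory.IndepFun.integral_div_sq_sub_sq_integral_div_of_gamma {Ω : Type*}
    {mΩ : MeasurableSpace Ω} {μ : Measure Ω} {U V : Ω → ℝ} (hUV : IndepFun U V μ)
    {a₁ r₁ a₂ r₂ : ℝ} (ha₁ : 0 < a₁) (hr₁ : 0 < r₁) (ha₂ : 2 < a₂) (hr₂ : 0 < r₂)
    (hU : μ.map U = gammaMeasure a₁ r₁) (hV : μ.map V = gammaMeasure a₂ r₂) :
    ∫ ω, (U ω / V ω) ^ 2 ∂μ - (∫ ω, U ω / V ω ∂μ) ^ 2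
      = r₂ ^ 2 * a₁ * (a₁ + a₂ - 1) / (r₁ ^ 2 * (a₂ - 1) ^ 2 * (a₂ - 2)) := by
  have hUm := aemeasurable_of_map_eq_gammaMeasure ha₁ hr₁ hU
  have hVm := aemeasurable_of_map_eq_gammaMeasure (by linarith) hr₂ hV
  have hmean : ∫ ω, U ω / V ω ∂μ = a₁ / r₁ * (r₂ / (a₂ - 1)) := by
    rw [hUV.integral_comp_div_comp (f := fun x => x) (g := fun y => y) hUm hVm
      measurable_id measurable_id, hU, hV, integral_id_gammaMeasure ha₁ hr₁,
      integral_inv_gammaMeasure (by linarith) hr₂]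
  have hsq : ∫ ω, (U ω / V ω) ^ 2 ∂μ
      = a₁ * (a₁ + 1) / r₁ ^ 2 * (r₂ ^ 2 / ((a₂ - 1) * (a₂ - 2))) := by
    simp_rw [div_pow (U _)]
    rw [hUV.integral_comp_div_comp (f := fun x => x ^ 2) (g := fun y => y ^ 2) hUm hVm
      (measurable_id.pow_const 2) (measurable_id.pow_const 2), hU, hV,
      integral_sq_gammaMeasure ha₁ hr₁, integral_inv_sq_gammaMeasure ha₂ hr₂]
  have : a₂ - 1 ≠ 0 := by linarith
  have : a₂ - 2 ≠ 0 := by linarith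
  rw [hsq, hmean]
  field_simp
  ring

theorem gamma_ratio_variance_general {Ω : Type*} [MeasureSpace Ω]
    (n₁ n₂ : ℕ) (hn₁ : 1 ≤ n₁) (hn₂ : 3 ≤ n₂)
    (α₁ α₂ : ℝ) (h₁ : 0 < α₁) (h₂ : 0 < α₂)
    (U V : Ω → ℝ) (hUV : IndepFun U V)
    (hU : Measure.map U ℙ = gammaMeasure n₁ (n₁ / α₁))
    (hV : Measure.map V ℙ = gammaMeasure n₂ (n₂ / α₂))
    (R : ℝ) (hR : R = α₁ / α₂) :
    (∫ ω, (U ω / V ω) ^ 2) - (∫ ω, U ω / V ω) ^ 2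
      = R ^ 2 * n₂ ^ 2 * ((n₁ : ℝ) + n₂ - 1)
          / (n₁ * ((n₂ : ℝ) - 1) ^ 2 * ((n₂ : ℝ) - 2)) ∧
    (∫ ω, (((n₂ : ℝ) - 1) / n₂ * (U ω / V ω)) ^ 2)
      - (∫ ω, ((n₂ : ℝ) - 1) / n₂ * (U ω / V ω)) ^ 2
      = R ^ 2 * ((n₁ : ℝ) + n₂ - 1) / (n₁ * ((n₂ : ℝ) - 2)) := by
  have ha₁ : (0 : ℝ) < n₁ := by exact_mod_cast hn₁
  have ha₂ : (2 : ℝ) < n₂ := by exact_mod_cast hn₂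
  have hgamma := hUV.integral_div_sq_sub_sq_integral_div_of_gamma ha₁ (by positivity) ha₂
    (by positivity) hU hV
  have : (n₂ : ℝ) - 1 ≠ 0 := by linarith
  have : (n₂ : ℝ) - 2 ≠ 0 := by linarith
  have hvar : (∫ ω, (U ω / V ω) ^ 2) - (∫ ω, U ω / V ω) ^ 2
      = R ^ 2 * n₂ ^ 2 * ((n₁ : ℝ) + n₂ - 1) / (n₁ * ((n₂ : ℝ) - 1) ^ 2 * ((n₂ : ℝ) - 2)) := by
    rw [hgamma, hR]
    field_simp
  refine ⟨hvar, ?_⟩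
  rw [integral_const_mul_sq_sub_sq_integral, hvar]
  field_simp

/-- If `U ~ Gamma(n₁, n₁/α₁)` and `V ~ Gamma(n₂, n₂/α₂)` are independent, then
`Var(U/V) = R²·n₂²·(n₁ + n₂ − 1)/(n₁·(n₂ − 1)²·(n₂ − 2))` where `R = α₁/α₂`;
consequently the unbiased estimator `R* = (n₂ − 1)/n₂ · (U/V)` satisfies
`Var(R*) = R²·(n₁ + n₂ − 1)/(n₁·(n₂ − 2))`.  (Here `Var(W) = E[W²] − (E[W])²`.) -/
theorem gamma_ratio_variance {Ω : Type*} [MeasureSpace Ω]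
    [IsProbabilityMeasure (ℙ : Measure Ω)]
    (n₁ n₂ : ℕ) (hn₁ : 1 ≤ n₁) (hn₂ : 3 ≤ n₂)
    (α₁ α₂ : ℝ) (h₁ : 0 < α₁) (h₂ : 0 < α₂)
    (U V : Ω → ℝ) (hUV : IndepFun U V)
    (hU : Measure.map U ℙ = gammaMeasure n₁ (n₁ / α₁))
    (hV : Measure.map V ℙ = gammaMeasure n₂ (n₂ / α₂))
    (R : ℝ) (hR : R = α₁ / α₂) :
    (∫ ω, (U ω / V ω) ^ 2) - (∫ ω, U ω / V ω) ^ 2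
      = R ^ 2 * n₂ ^ 2 * ((n₁ : ℝ) + n₂ - 1)
          / (n₁ * ((n₂ : ℝ) - 1) ^ 2 * ((n₂ : ℝ) - 2)) ∧
    (∫ ω, (((n₂ : ℝ) - 1) / n₂ * (U ω / V ω)) ^ 2)
      - (∫ ω, ((n₂ : ℝ) - 1) / n₂ * (U ω / V ω)) ^ 2
      = R ^ 2 * ((n₁ : ℝ) + n₂ - 1) / (n₁ * ((n₂ : ℝ) - 2)) :=
  gamma_ratio_variance_general n₁ n₂ hn₁ hn₂ α₁ α₂ h₁ h₂ U V hUV hU hV R hR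
end
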